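/- For the ReLU activation σ(u) = max(u, 0), the r-th coefficient of its Hermite expansion with respect to the standard Gaussian measure satisfies, for every even integer r ≥ 2: μ_r(σ) = (−1)^{(r−2)/2} (r−3)!! / √(2π · r!). -/

import Mathlib

open MeasureTheory ProbabilityTheory Real Polynomial Set
open scoped Nat

/-! With `w(x) = exp(-x²/2)`, the Hermite recursion gives the Rodrigues step `(He_k w)' = -He_{k+1} w`,
so `-(He_n + x He_{n+1}) w` is an antiderivative of `x He_{n+2} w`. Since `σ(x) = x` on `(0, ∞)` and
vanishes elsewhere, `E[σ(g) He_{n+2}(g)] = (2π)^{-1/2} ∫₀^∞ x He_{n+2} w = (2π)^{-1/2} He_n(0)`, and for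
`n` even `He_n(0) = (-1)^{n/2} (n-1)‼`. -/

namespace Polynomial

theorem hasDerivAt_aeval_hermite_mul_gaussian (n : ℕ) (x : ℝ) :
    HasDerivAt (fun y : ℝ => aeval y (hermite n) * exp (-(y ^ 2 / 2)))
      (-(aeval x (hermite (n + 1)) * exp (-(x ^ 2 / 2)))) x := by
  have hgauss : HasDerivAt (fun y : ℝ => -(y ^ 2 / 2)) (-x) x := by
    simpa using ((hasDerivAt_pow 2 x).div_const 2).fun_neg
  refine ((hermite n).hasDerivAt_aeval x |>.mul hgauss.exp).congr_deriv ?_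
  rw [hermite_succ, map_sub, map_mul, aeval_X]
  ring

theorem integrable_aeval_mul_gaussian {R : Type*} [CommSemiring R] [Algebra R ℝ] (p : R[X]) :
    Integrable fun x : ℝ => aeval x p * exp (-(x ^ 2 / 2)) := by
  induction p using Polynomial.induction_on' with
  | add p q hp hq => exact (hp.add hq).congr (ae_of_all _ fun x => by simp [add_mul])
  | monomial k c =>
    refine ((integrable_rpow_mul_exp_neg_mul_sq (b := 1 / 2) (by norm_num) (s := k)
      (by linarith [k.cast_nonneg (α := ℝ)])).const_mul (algebraMap R ℝ c)).congr
      (ae_of_all _ fun x => ?_)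
    simp only [rpow_natCast, aeval_monomial, neg_mul, one_div_mul_eq_div, mul_assoc]

theorem integral_Ioi_mul_aeval_hermite_mul_gaussian (n : ℕ) :
    ∫ x in Ioi (0 : ℝ), x * (aeval x (hermite (n + 2)) * exp (-(x ^ 2 / 2)))
      = aeval 0 (hermite n) := by
  set F : ℝ → ℝ := fun y => -(aeval y (hermite n) * exp (-(y ^ 2 / 2))
    + y * (aeval y (hermite (n + 1)) * exp (-(y ^ 2 / 2))))
  have hderiv (x : ℝ) : HasDerivAt F (x * (aeval x (hermite (n + 2)) * exp (-(x ^ 2 / 2)))) x :=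
    ((hasDerivAt_aeval_hermite_mul_gaussian n x).add
      ((hasDerivAt_id x).mul (hasDerivAt_aeval_hermite_mul_gaussian (n + 1) x))).neg.congr_deriv
      (by simp only [id_eq]; ring)
  have hF : Integrable F :=
    (integrable_aeval_mul_gaussian (hermite n + X * hermite (n + 1))).neg.congr
      (ae_of_all _ fun x => by simp only [F, Pi.neg_apply, map_add, map_mul, aeval_X]; ring)
  have hF' : IntegrableOn
      (fun x : ℝ => x * (aeval x (hermite (n + 2)) * exp (-(x ^ 2 / 2)))) (Ioi 0) := by
    refine (integrable_aeval_mul_gaussian (X * hermite (n + 2))).integrableOn.congr_fun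
      (fun x _ => ?_) measurableSet_Ioi
    simp only [map_mul, aeval_X, mul_assoc]
  rw [integral_Ioi_of_hasDerivAt_of_tendsto' (fun x _ => hderiv x) hF'
    (tendsto_zero_of_hasDerivAt_of_integrableOn_Ioi (fun x _ => hderiv x) hF' hF.integrableOn)]
  simp [F]

theorem aeval_zero_hermite_two_mul (n : ℕ) :
    aeval (0 : ℝ) (hermite (2 * n)) = (-1) ^ n * (2 * n - 1)‼ := by
  rw [← coeff_zero_eq_aeval_zero', ← add_zero (2 * n), coeff_hermite_explicit]
  simp

end Polynomial

theorem integral_max_zero_mul_eq_setIntegral_Ioi {μ : Measure ℝ} (f : ℝ → ℝ) :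
    ∫ x, max x 0 * f x ∂μ = ∫ x in Ioi 0, x * f x ∂μ := by
  rw [← setIntegral_eq_integral_of_forall_compl_eq_zero fun x hx => by
    rw [max_eq_right (not_lt.mp hx), zero_mul]]
  exact setIntegral_congr_fun measurableSet_Ioi fun x hx => by rw [max_eq_left (le_of_lt hx)]

theorem integral_gaussianReal_zero_one (f : ℝ → ℝ) :
    ∫ x, f x ∂gaussianReal 0 1 = (√(2 * π))⁻¹ * ∫ x, f x * exp (-(x ^ 2 / 2)) := by
  rw [integral_gaussianReal_eq_integral_smul one_ne_zero, ← integral_const_mul]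
  congr 1 with x
  simp only [gaussianPDFReal_def, NNReal.coe_one, mul_one, sub_zero, smul_eq_mul, neg_div]
  ring

/-- For the ReLU activation `σ(u) = max(u, 0)`, the `r`-th coefficient of its
expansion in the orthonormal Hermite polynomial basis with respect to the standard Gaussian
measure, namely `μ_r(σ) = E_{g ~ N(0,1)}[σ(g) · He_r(g) / √(r!)]`, satisfies for every even
integer `r ≥ 2`:
`μ_r(σ) = (−1)^{(r−2)/2} (r−3)‼ / √(2π · r!)`. -/
theorem relu_hermite_coefficient (r : ℕ) (hr : 2 ≤ r) (hre : Even r) :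
    (∫ g : ℝ, max g 0 * (Polynomial.aeval g (Polynomial.hermite r)) ∂(gaussianReal 0 1)) /
        Real.sqrt (r.factorial) =
      (-1 : ℝ) ^ ((r - 2) / 2) * (Nat.doubleFactorial (r - 3) : ℝ) /
        Real.sqrt (2 * Real.pi * (r.factorial : ℝ)) := by
  obtain ⟨n, rfl⟩ : ∃ n, r = 2 * n + 2 := by
    obtain ⟨m, rfl⟩ := hre
    exact ⟨m - 1, by omega⟩
  rw [show (2 * n + 2 - 2) / 2 = n by omega, show 2 * n + 2 - 3 = 2 * n - 1 by omega,
    sqrt_mul (by positivity : (0 : ℝ) ≤ 2 * π), integral_gaussianReal_zero_one]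
  simp only [mul_assoc]
  rw [integral_max_zero_mul_eq_setIntegral_Ioi, integral_Ioi_mul_aeval_hermite_mul_gaussian,
    aeval_zero_hermite_two_mul]
  field_simp
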